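/- arXiv:1203.0697 — 6 statements merged into one kernel-verified Lean document; each statement's English description precedes it below -/
import Mathlib

section
/- (Rank Property.) Let (Ω, μ) be a probability space, let d, r ≥ 1, let K be a finite type, and let Y_u, Y_v : Ω → Fin d, Y_S : Ω → K, and H : Ω → Fin r be measurable random variables. Suppose that for every h ∈ Fin r and every k ∈ K and all i, j ∈ Fin d, μ(Y_u = i, Y_v = j, Y_S = k, H = h) · μ(Y_S = k, H = h) = μ(Y_u = i, Y_S = k, H = h) · μ(Y_v = j, Y_S = k, H = h) (conditional independence of Y_u and Y_v given {Y_S = k, H = h}). Then for every k ∈ K, the d × d real matrix M_k defined by (M_k)_{i,j} = μ(Y_u = i, Y_v = j, Y_S = k) has rank at most r. -/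
open MeasureTheory

private lemma matrix_rank_add_le {d : ℕ} (A B : Matrix (Fin d) (Fin d) ℝ) :
    (A + B).rank ≤ A.rank + B.rank := by
  classical
  unfold Matrix.rank
  rw [Matrix.mulVecLin_add]
  have hle : LinearMap.range (A.mulVecLin + B.mulVecLin)
      ≤ LinearMap.range A.mulVecLin ⊔ LinearMap.range B.mulVecLin := by
    rintro x ⟨y, rfl⟩
    exact Submodule.mem_sup.2 ⟨A.mulVecLin y, ⟨y, rfl⟩, B.mulVecLin y, ⟨y, rfl⟩, rfl⟩
  calc Module.finrank ℝ (LinearMap.range (A.mulVecLin + B.mulVecLin))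
      ≤ Module.finrank ℝ ↥(LinearMap.range A.mulVecLin ⊔ LinearMap.range B.mulVecLin) :=
        Submodule.finrank_mono hle
    _ ≤ _ := Submodule.finrank_add_le_finrank_add_finrank _ _

private lemma matrix_rank_sum_le {d : ℕ} {ι : Type*} (s : Finset ι)
    (f : ι → Matrix (Fin d) (Fin d) ℝ) :
    (∑ i ∈ s, f i).rank ≤ ∑ i ∈ s, (f i).rank := by
  classical
  induction s using Finset.induction with
  | empty => simp [Matrix.rank_zero]
  | insert _ _ h ih =>
    rw [Finset.sum_insert h, Finset.sum_insert h]
    exact (matrix_rank_add_le _ _).trans (add_le_add_right ih _)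

private lemma matrix_rank_vecMulVec_le {d : ℕ} (w v : Fin d → ℝ) :
    (Matrix.vecMulVec w v).rank ≤ 1 := by
  rw [Matrix.vecMulVec_eq (Fin 1)]
  refine (Matrix.rank_mul_le_left _ _).trans ?_
  exact (Matrix.rank_le_card_width (Matrix.replicateCol (Fin 1) w)).trans (by simp)

/-- **Rank Property.**  If `Y_u` and `Y_v` are conditionally independent given each
event `{Y_S = k, H = h}` (encoded by the product identity, covering zero-probability
events), then for every `k` the `d × d` matrix
`(M_k)_{i,j} = μ(Y_u = i, Y_v = j, Y_S = k)` has rank at most `r`. -/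
theorem rank_property_of_mixture
    {Ω : Type*} [MeasurableSpace Ω] (μ : Measure Ω) [IsProbabilityMeasure μ]
    {d r : ℕ} (hd : 1 ≤ d) (hr : 1 ≤ r)
    {K : Type*} [Fintype K] [MeasurableSpace K] [MeasurableSingletonClass K]
    (Yu Yv : Ω → Fin d) (YS : Ω → K) (H : Ω → Fin r)
    (hYu : Measurable Yu) (hYv : Measurable Yv)
    (hYS : Measurable YS) (hH : Measurable H)
    (hci : ∀ (h : Fin r) (k : K) (i j : Fin d),
      μ {ω | Yu ω = i ∧ Yv ω = j ∧ YS ω = k ∧ H ω = h} * μ {ω | YS ω = k ∧ H ω = h}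
        = μ {ω | Yu ω = i ∧ YS ω = k ∧ H ω = h} * μ {ω | Yv ω = j ∧ YS ω = k ∧ H ω = h}) :
    ∀ k : K,
      (Matrix.of fun i j : Fin d =>
        (μ {ω | Yu ω = i ∧ Yv ω = j ∧ YS ω = k}).toReal).rank ≤ r := by
  intro k
  classical
  -- the per-`h` matrices
  set A : Fin r → Matrix (Fin d) (Fin d) ℝ := fun h =>
    Matrix.of fun i j =>
      (μ {ω | Yu ω = i ∧ Yv ω = j ∧ YS ω = k ∧ H ω = h}).toReal with hA
  -- the full matrix is the sum of the `A h`
  have hsum : (Matrix.of fun i j : Fin d =>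
      (μ {ω | Yu ω = i ∧ Yv ω = j ∧ YS ω = k}).toReal) = ∑ h, A h := by
    ext i j
    have hdecomp : {ω | Yu ω = i ∧ Yv ω = j ∧ YS ω = k}
        = ⋃ h, {ω | Yu ω = i ∧ Yv ω = j ∧ YS ω = k ∧ H ω = h} := by
      ext ω
      simp only [Set.mem_setOf_eq, Set.mem_iUnion]
      constructor
      · rintro ⟨h1, h2, h3⟩; exact ⟨H ω, h1, h2, h3, rfl⟩
      · rintro ⟨h, h1, h2, h3, -⟩; exact ⟨h1, h2, h3⟩
    have hmeas : ∀ h : Fin r,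
        MeasurableSet {ω | Yu ω = i ∧ Yv ω = j ∧ YS ω = k ∧ H ω = h} := by
      intro h
      exact (hYu (measurableSet_singleton i)).inter
        ((hYv (measurableSet_singleton j)).inter
          ((hYS (measurableSet_singleton k)).inter (hH (measurableSet_singleton h))))
    have hdisj : Pairwise (Function.onFun Disjoint fun h : Fin r =>
        {ω | Yu ω = i ∧ Yv ω = j ∧ YS ω = k ∧ H ω = h}) := by
      intro a b hab
      refine Set.disjoint_left.2 ?_
      rintro ω ⟨-, -, -, ha⟩ ⟨-, -, -, hb⟩
      exact hab (ha ▸ hb ▸ rfl)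
    have := measure_iUnion (μ := μ) hdisj hmeas
    simp only [Matrix.of_apply]
    rw [hdecomp, this, tsum_fintype]
    simp only [Matrix.sum_apply, hA, Matrix.of_apply]
    exact ENNReal.toReal_sum fun h _ => measure_ne_top μ _
  rw [hsum]
  calc (∑ h, A h).rank ≤ ∑ h : Fin r, (A h).rank := matrix_rank_sum_le _ _
    _ ≤ ∑ _h : Fin r, 1 := by
        refine Finset.sum_le_sum fun h _ => ?_
        -- show each `A h` has rank at most 1
        by_cases hzero : μ {ω | YS ω = k ∧ H ω = h} = 0
        · have hAzero : A h = 0 := by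
            ext i j
            have hsub : {ω | Yu ω = i ∧ Yv ω = j ∧ YS ω = k ∧ H ω = h}
                ⊆ {ω | YS ω = k ∧ H ω = h} := by
              rintro ω ⟨-, -, h3, h4⟩; exact ⟨h3, h4⟩
            have : μ {ω | Yu ω = i ∧ Yv ω = j ∧ YS ω = k ∧ H ω = h} = 0 :=
              measure_mono_null hsub hzero
            simp [hA, this]
          rw [hAzero, Matrix.rank_zero]
          exact Nat.zero_le 1
        · set c : ℝ := (μ {ω | YS ω = k ∧ H ω = h}).toReal with hc
          have hcpos : 0 < c :=
            ENNReal.toReal_pos hzero (measure_ne_top μ _)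
          have hAeq : A h = Matrix.vecMulVec
              (fun i => (μ {ω | Yu ω = i ∧ YS ω = k ∧ H ω = h}).toReal / c)
              (fun j => (μ {ω | Yv ω = j ∧ YS ω = k ∧ H ω = h}).toReal) := by
            ext i j
            have key := hci h k i j
            have key' : (μ {ω | Yu ω = i ∧ Yv ω = j ∧ YS ω = k ∧ H ω = h}).toReal * c
                = (μ {ω | Yu ω = i ∧ YS ω = k ∧ H ω = h}).toReal
                  * (μ {ω | Yv ω = j ∧ YS ω = k ∧ H ω = h}).toReal := by
              rw [hc, ← ENNReal.toReal_mul, ← ENNReal.toReal_mul, key]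
            simp only [hA, Matrix.of_apply, Matrix.vecMulVec_apply]
            field_simp
            linarith [key']
          rw [hAeq]
          exact matrix_rank_vecMulVec_le _ _
    _ = r := by simp
end

section
/- (Spectral decomposition for mixtures of product distributions.) Let d ≥ 1, let A, B, W be d × d real matrices with A and B invertible, and let π ∈ ℝ^d have all entries strictly positive. For each k ∈ Fin d define M_k := A · Diag(h ↦ π_h · W_{k,h}) · Bᵀ and M := A · Diag(π) · Bᵀ. Then M is invertible, M_k · M⁻¹ = A · Diag(h ↦ W_{k,h}) · A⁻¹, and the characteristic polynomial of M_k · M⁻¹ equals ∏_{h ∈ Fin d} (X − W_{k,h}); in particular the eigenvalues of M_k · M⁻¹ (with multiplicity) are exactly the entries W_{k,1}, …, W_{k,d} of the k-th row of W. (In the intended probabilistic interpretation, for a latent variable model Y_u ⫫ Y_v ⫫ Y_w | H with full-rank conditional probability matrices, A = [P(Y_u=i|H=j)], B = [P(Y_v=i|H=j)], W = [P(Y_w=k|H=h)]_{k,h}, π = the mixing weights, M = [P(Y_u=i,Y_v=j)], and M_k = [P(Y_u=i,Y_v=j,Y_w=k)]; thus the eigenvalues of M_k M⁻¹ recover the column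 entries of M_{w|H}.) -/
open Polynomial Matrix

lemma my_charmatrix_eq {n : Type*} [DecidableEq n] [Fintype n] {R : Type*} [CommRing R]
    (M : Matrix n n R) :
    charmatrix M = Matrix.scalar n (X : R[X]) - (C : R →+* R[X]).mapMatrix M := rfl

lemma my_charpoly_conj {d : ℕ} (P N : Matrix (Fin d) (Fin d) ℝ) (hP : IsUnit P.det) :
    (P * N * P⁻¹).charpoly = N.charpoly := by
  set F : Matrix (Fin d) (Fin d) ℝ →+* Matrix (Fin d) (Fin d) ℝ[X] :=
    (C : ℝ →+* ℝ[X]).mapMatrix with hF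
  have hmul : ∀ (S T : Matrix (Fin d) (Fin d) ℝ), F (S * T) = F S * F T :=
    fun S T => RingHom.map_mul F S T
  have h1 : F P * F P⁻¹ = 1 := by
    rw [← hmul, Matrix.mul_nonsing_inv _ hP, RingHom.map_one]
  have hcomm : F P * Matrix.scalar (Fin d) (X : ℝ[X]) =
      Matrix.scalar (Fin d) (X : ℝ[X]) * F P :=
    ((Matrix.scalar_commute (X : ℝ[X]) (fun r => Commute.all _ _) (F P)).eq).symm
  have key : charmatrix (P * N * P⁻¹) = F P * charmatrix N * F P⁻¹ := by
    rw [my_charmatrix_eq, my_charmatrix_eq, mul_sub, sub_mul]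
    congr 1
    · rw [hcomm, mul_assoc, h1, mul_one]
    · show F (P * N * P⁻¹) = F P * F N * F P⁻¹
      rw [hmul, hmul]
  have hdet1 : (F P).det * (F P⁻¹).det = 1 := by
    rw [← Matrix.det_mul, h1, Matrix.det_one]
  unfold Matrix.charpoly
  rw [key, Matrix.det_mul, Matrix.det_mul, mul_right_comm, hdet1, one_mul]

lemma my_charpoly_diagonal {d : ℕ} (v : Fin d → ℝ) :
    (Matrix.diagonal v).charpoly = ∏ h : Fin d, (X - C (v h)) := by
  have : charmatrix (Matrix.diagonal v) = Matrix.diagonal (fun h => (X : ℝ[X]) - C (v h)) := by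
    ext i j
    by_cases h : i = j
    · subst h; simp [charmatrix_apply_eq]
    · simp [charmatrix_apply_ne _ _ _ h, Matrix.diagonal_apply_ne _ h]
  rw [Matrix.charpoly, this, Matrix.det_diagonal]

/-- **Spectral decomposition for mixtures of product distributions.**
With `M_k = A · Diag(h ↦ π_h · W_{k,h}) · Bᵀ` and `M = A · Diag(π) · Bᵀ` for
invertible `A`, `B` and strictly positive `π`, the matrix `M` is invertible,
`M_k · M⁻¹ = A · Diag(W_{k,·}) · A⁻¹`, and the characteristic polynomial of
`M_k · M⁻¹` is `∏ h, (X − W_{k,h})`; i.e. the eigenvalues (with multiplicity)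
of `M_k · M⁻¹` are exactly the entries of the `k`-th row of `W`. -/
theorem spectral_decomposition_product_mixture
    {d : ℕ} (hd : 1 ≤ d)
    (A B W : Matrix (Fin d) (Fin d) ℝ)
    (hA : IsUnit A.det) (hB : IsUnit B.det)
    (piv : Fin d → ℝ) (hpiv : ∀ h, 0 < piv h)
    (M : Matrix (Fin d) (Fin d) ℝ)
    (hM : M = A * Matrix.diagonal piv * Bᵀ)
    (Mk : Fin d → Matrix (Fin d) (Fin d) ℝ)
    (hMk : ∀ k, Mk k = A * Matrix.diagonal (fun h => piv h * W k h) * Bᵀ) :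
    IsUnit M.det ∧
    (∀ k, Mk k * M⁻¹ = A * Matrix.diagonal (fun h => W k h) * A⁻¹) ∧
    (∀ k, (Mk k * M⁻¹).charpoly = ∏ h : Fin d, (X - C (W k h))) := by
  have hD : IsUnit (Matrix.diagonal piv).det := by
    rw [Matrix.det_diagonal]
    exact isUnit_iff_ne_zero.2 (Finset.prod_ne_zero_iff.2 fun h _ => (hpiv h).ne')
  have hBT : IsUnit Bᵀ.det := by rwa [Matrix.det_transpose]
  have hMdet : IsUnit M.det := by
    rw [hM, Matrix.det_mul, Matrix.det_mul]
    exact (hA.mul hD).mul hBT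
  have hMinv : M⁻¹ = Bᵀ⁻¹ * (Matrix.diagonal piv)⁻¹ * A⁻¹ := by
    rw [hM, Matrix.mul_inv_rev, Matrix.mul_inv_rev, mul_assoc]
  have hkey : ∀ k, Mk k * M⁻¹ = A * Matrix.diagonal (fun h => W k h) * A⁻¹ := by
    intro k
    rw [hMk, hMinv]
    have h1 : Bᵀ * (Bᵀ⁻¹ * (Matrix.diagonal piv)⁻¹ * A⁻¹) =
        (Matrix.diagonal piv)⁻¹ * A⁻¹ := by
      rw [← mul_assoc, ← mul_assoc, Matrix.mul_nonsing_inv _ hBT, one_mul]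
    have hdd : Matrix.diagonal (fun h => piv h * W k h) * (Matrix.diagonal piv)⁻¹ =
        Matrix.diagonal (fun h => W k h) := by
      have hinv : (Matrix.diagonal piv)⁻¹ = Matrix.diagonal (fun h => (piv h)⁻¹) :=
        Matrix.inv_eq_right_inv (by
          rw [Matrix.diagonal_mul_diagonal]
          convert Matrix.diagonal_one with h
          field_simp [(hpiv h).ne'])
      rw [hinv, Matrix.diagonal_mul_diagonal]
      have he : (fun i => piv i * W k i * (piv i)⁻¹) = fun h => W k h := by
        funext h
        field_simp [(hpiv h).ne']
      rw [he]
    rw [mul_assoc (A * Matrix.diagonal (fun h => piv h * W k h)), h1,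
      mul_assoc A, ← mul_assoc (Matrix.diagonal _), hdd, ← mul_assoc]
  refine ⟨hMdet, hkey, fun k => ?_⟩
  rw [hkey k, my_charpoly_conj _ _ hA, my_charpoly_diagonal]
end

section
/- (Observable operator.) Let ι₁, ι₂, ι₃ be finite types and r ≥ 1. Let M₁ : Matrix ι₁ (Fin r) ℝ, M₂ : Matrix ι₂ (Fin r) ℝ, M₃ : Matrix ι₃ (Fin r) ℝ, and let π : Fin r → ℝ have all entries nonzero. Let U₁ : Matrix ι₁ (Fin r) ℝ and U₂ : Matrix ι₂ (Fin r) ℝ be such that the r × r matrices U₁ᵀ · M₁ and U₂ᵀ · M₂ are invertible. Define P := M₁ · Diag(π) · M₂ᵀ and, for q ∈ ι₃, P_q := M₁ · Diag(h ↦ π_h · M₃_{q,h}) · M₂ᵀ. Then: (1) U₁ᵀ · P · U₂ is invertible; (2) for every m : ι₃ → ℝ, the observable operator C̃(m) := (U₁ᵀ · (∑_{q ∈ ι₃} m_q • P_q) · U₂) · (U₁ᵀ · P · U₂)⁻¹ satisfies C̃(m) = (U₁ᵀ · M₁) · Diag(h ↦ ∑_{q} m_q · M₃_{q,h}) · (U₁ᵀ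 · M₁)⁻¹; (3) consequently the characteristic polynomial of C̃(m) equals ∏_{j ∈ Fin r} (X − ⟨m, M₃ e_j⟩), where ⟨m, M₃ e_j⟩ = ∑_q m_q · M₃_{q,j}, so the r eigenvalues of C̃(m) with multiplicity are the values ⟨m, M₃ e_j⟩, j ∈ Fin r. -/
open Polynomial Matrix

theorem charpoly_diag {r : ℕ} (d : Fin r → ℝ) :
    (Matrix.diagonal d).charpoly = ∏ j, (X - C (d j)) := by
  rw [Matrix.charpoly, charmatrix]
  rw [show ((Matrix.scalar (Fin r)) X - C.mapMatrix (Matrix.diagonal d))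
      = Matrix.diagonal (fun i => X - C (d i)) by
    ext i j; by_cases h : i = j <;> simp [h, Matrix.diagonal]]
  simp [Matrix.det_diagonal]

theorem charpoly_conj' {r : ℕ} (A D : Matrix (Fin r) (Fin r) ℝ) (hA : IsUnit A.det) :
    (A * D * A⁻¹).charpoly = D.charpoly := by
  have h1 : C.mapMatrix A * C.mapMatrix A⁻¹ = (1 : Matrix (Fin r) (Fin r) ℝ[X]) := by
    rw [← _root_.map_mul, Matrix.mul_nonsing_inv _ hA, _root_.map_one]
  have key : charmatrix (A * D * A⁻¹)
      = C.mapMatrix A * charmatrix D * C.mapMatrix A⁻¹ := by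
    rw [charmatrix, charmatrix, Matrix.mul_sub, Matrix.sub_mul]
    congr 1
    · rw [← Matrix.scalar_commute X (fun r' => Commute.all X r') (C.mapMatrix A),
        Matrix.mul_assoc, h1, Matrix.mul_one]
    · rw [← _root_.map_mul, ← _root_.map_mul]
  rw [Matrix.charpoly, Matrix.charpoly, key, Matrix.det_mul, Matrix.det_mul]
  calc (C.mapMatrix A).det * (charmatrix D).det * (C.mapMatrix A⁻¹).det
      = (C.mapMatrix A).det * (C.mapMatrix A⁻¹).det * (charmatrix D).det := by ring
    _ = (charmatrix D).det := by rw [← Matrix.det_mul, h1, Matrix.det_one, one_mul]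

/-- **Observable operator.**  With `P = M₁ · Diag(π) · M₂ᵀ` and
`P_q = M₁ · Diag(h ↦ π_h · M₃_{q,h}) · M₂ᵀ`, if `U₁ᵀM₁` and `U₂ᵀM₂` are invertible
`r × r` matrices and all entries of `π` are nonzero, then `U₁ᵀ · P · U₂` is invertible,
the observable operator `C̃(m) = (U₁ᵀ(∑_q m_q • P_q)U₂) · (U₁ᵀ P U₂)⁻¹` equals
`(U₁ᵀM₁) · Diag(h ↦ ∑_q m_q M₃_{q,h}) · (U₁ᵀM₁)⁻¹`, and its characteristic polynomial
is `∏_j (X − ∑_q m_q · M₃_{q,j})`, so its eigenvalues with multiplicity are the inner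
products `⟨m, M₃ e_j⟩`. -/
theorem observable_operator
    {ι₁ ι₂ ι₃ : Type*} [Fintype ι₁] [Fintype ι₂] [Fintype ι₃]
    {r : ℕ} (hr : 1 ≤ r)
    (M₁ : Matrix ι₁ (Fin r) ℝ) (M₂ : Matrix ι₂ (Fin r) ℝ) (M₃ : Matrix ι₃ (Fin r) ℝ)
    (piv : Fin r → ℝ) (hpiv : ∀ h, piv h ≠ 0)
    (U₁ : Matrix ι₁ (Fin r) ℝ) (U₂ : Matrix ι₂ (Fin r) ℝ)
    (hU₁ : IsUnit (U₁ᵀ * M₁).det) (hU₂ : IsUnit (U₂ᵀ * M₂).det)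
    (P : Matrix ι₁ ι₂ ℝ) (hP : P = M₁ * Matrix.diagonal piv * M₂ᵀ)
    (Pq : ι₃ → Matrix ι₁ ι₂ ℝ)
    (hPq : ∀ q, Pq q = M₁ * Matrix.diagonal (fun h => piv h * M₃ q h) * M₂ᵀ) :
    IsUnit (U₁ᵀ * P * U₂).det ∧
    (∀ m : ι₃ → ℝ,
      (U₁ᵀ * (∑ q : ι₃, m q • Pq q) * U₂) * (U₁ᵀ * P * U₂)⁻¹
        = (U₁ᵀ * M₁) * Matrix.diagonal (fun h => ∑ q : ι₃, m q * M₃ q h)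
            * (U₁ᵀ * M₁)⁻¹) ∧
    (∀ m : ι₃ → ℝ,
      ((U₁ᵀ * (∑ q : ι₃, m q • Pq q) * U₂) * (U₁ᵀ * P * U₂)⁻¹).charpoly
        = ∏ j : Fin r, (X - C (∑ q : ι₃, m q * M₃ q j))) := by
  set A := U₁ᵀ * M₁ with hA
  set N := M₂ᵀ * U₂ with hNdef
  have hN : IsUnit N.det := by
    have h : N = (U₂ᵀ * M₂)ᵀ := by rw [Matrix.transpose_mul, Matrix.transpose_transpose]
    rw [h, Matrix.det_transpose]; exact hU₂
  have hDp : IsUnit (Matrix.diagonal piv).det := by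
    rw [Matrix.det_diagonal]
    exact isUnit_iff_ne_zero.mpr (Finset.prod_ne_zero_iff.mpr fun h _ => hpiv h)
  have hfact : U₁ᵀ * P * U₂ = A * (Matrix.diagonal piv * N) := by
    rw [hP]; simp only [hA, hNdef, Matrix.mul_assoc]
  have hUnit : IsUnit (U₁ᵀ * P * U₂).det := by
    rw [hfact, Matrix.det_mul, Matrix.det_mul]
    exact hU₁.mul (hDp.mul hN)
  have hsum : ∀ m : ι₃ → ℝ, U₁ᵀ * (∑ q : ι₃, m q • Pq q) * U₂
      = A * (Matrix.diagonal (fun h => ∑ q : ι₃, m q * M₃ q h)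
          * (Matrix.diagonal piv * N)) := by
    intro m
    have hs : (∑ q : ι₃, m q • Pq q)
        = M₁ * (Matrix.diagonal (fun h => ∑ q : ι₃, m q * M₃ q h)
            * Matrix.diagonal piv) * M₂ᵀ := by
      simp only [hPq]
      rw [Matrix.diagonal_mul_diagonal]
      calc ∑ q : ι₃, m q • (M₁ * Matrix.diagonal (fun h => piv h * M₃ q h) * M₂ᵀ)
          = ∑ q : ι₃, M₁ * (m q • Matrix.diagonal (fun h => piv h * M₃ q h)) * M₂ᵀ := by
            simp [smul_mul_assoc, mul_smul_comm]
        _ = M₁ * (∑ q : ι₃, m q • Matrix.diagonal (fun h => piv h * M₃ q h)) * M₂ᵀ := by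
            rw [← Matrix.sum_mul, ← Matrix.mul_sum]
        _ = M₁ * Matrix.diagonal (fun h => (∑ q : ι₃, m q * M₃ q h) * piv h) * M₂ᵀ := by
            congr 2
            ext i j
            by_cases h : i = j
            · subst h
              simp [Matrix.sum_apply, Matrix.diagonal, Finset.sum_mul]
              ring_nf
              exact Finset.sum_congr rfl fun q _ => by ring
            · simp [Matrix.sum_apply, Matrix.diagonal, h]
    rw [hs]; simp only [hA, hNdef, Matrix.mul_assoc]
  have hmain : ∀ m : ι₃ → ℝ,
      (U₁ᵀ * (∑ q : ι₃, m q • Pq q) * U₂) * (U₁ᵀ * P * U₂)⁻¹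
        = A * Matrix.diagonal (fun h => ∑ q : ι₃, m q * M₃ q h) * A⁻¹ := by
    intro m
    rw [hsum m, hfact, Matrix.mul_inv_rev, Matrix.mul_inv_rev]
    simp only [Matrix.mul_assoc]
    rw [show N * (N⁻¹ * ((Matrix.diagonal piv)⁻¹ * A⁻¹)) = (Matrix.diagonal piv)⁻¹ * A⁻¹ by
      rw [← Matrix.mul_assoc, Matrix.mul_nonsing_inv _ hN, Matrix.one_mul]]
    rw [show Matrix.diagonal piv * ((Matrix.diagonal piv)⁻¹ * A⁻¹) = A⁻¹ by
      rw [← Matrix.mul_assoc, Matrix.mul_nonsing_inv _ hDp, Matrix.one_mul]]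
  refine ⟨hUnit, hmain, fun m => ?_⟩
  rw [hmain m, charpoly_conj' A _ hU₁, charpoly_diag]
end

section
/- For every a, b ∈ [0, 1], |a · log a − b · log b| ≤ φ(|a − b|), where log is the natural logarithm, the convention 0 · log 0 = 0 is used, and φ : [0, ∞) → ℝ is defined by φ(0) = 0, φ(x) = −x · log x for 0 < x < 1/e, and φ(x) = 1/e for x ≥ 1/e. -/
/-- The function `φ : [0,∞) → ℝ` with `φ(0) = 0`, `φ(x) = −x log x` for
`0 < x < 1/e`, and `φ(x) = 1/e` for `x ≥ 1/e`. -/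
noncomputable def phi (x : ℝ) : ℝ :=
  if x = 0 then 0
  else if x < 1 / Real.exp 1 then -x * Real.log x
  else 1 / Real.exp 1

lemma f_nonpos {x : ℝ} (hx0 : 0 ≤ x) (hx1 : x ≤ 1) : x * Real.log x ≤ 0 :=
  mul_nonpos_of_nonneg_of_nonpos hx0 (Real.log_nonpos hx0 hx1)

lemma f_ge {x : ℝ} (hx0 : 0 ≤ x) : -(1 / Real.exp 1) ≤ x * Real.log x := by
  rcases eq_or_lt_of_le hx0 with h | h
  · rw [← h]; simp; positivity
  · have h1 : Real.log (1 / (Real.exp 1 * x)) ≤ 1 / (Real.exp 1 * x) - 1 :=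
      Real.log_le_sub_one_of_pos (by positivity)
    rw [Real.log_div one_ne_zero (by positivity), Real.log_one,
      Real.log_mul (Real.exp_ne_zero 1) h.ne', Real.log_exp] at h1
    have hx : -Real.log x ≤ 1 / (Real.exp 1 * x) := by linarith
    have h2 : x * (-Real.log x) ≤ x * (1 / (Real.exp 1 * x)) :=
      mul_le_mul_of_nonneg_left hx hx0
    have h3 : x * (1 / (Real.exp 1 * x)) = 1 / Real.exp 1 := by
      field_simp
    nlinarith

lemma key_upper {a b : ℝ} (ha : 0 ≤ a) (hab : a < b) (hb : b ≤ 1) :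
    b * Real.log b - a * Real.log a ≤ b - a := by
  have hb0 : 0 < b := lt_of_le_of_lt ha hab
  have hlogb : Real.log b ≤ 0 := Real.log_nonpos hb0.le hb
  rcases eq_or_lt_of_le ha with h | h
  · rw [← h]
    have : (b - 0) * Real.log b ≤ 0 :=
      mul_nonpos_of_nonneg_of_nonpos (by linarith) hlogb
    nlinarith
  · have h1 : Real.log (b / a) ≤ b / a - 1 :=
      Real.log_le_sub_one_of_pos (by positivity)
    rw [Real.log_div hb0.ne' h.ne'] at h1
    have h3 : a * (Real.log b - Real.log a) ≤ a * (b / a - 1) :=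
      mul_le_mul_of_nonneg_left h1 ha
    have h4 : a * (b / a - 1) = b - a := by field_simp
    have h5 : (b - a) * Real.log b ≤ 0 :=
      mul_nonpos_of_nonneg_of_nonpos (by linarith) hlogb
    have h6 : b * Real.log b - a * Real.log a =
        a * (Real.log b - Real.log a) + (b - a) * Real.log b := by ring
    linarith

lemma key_lower {a b : ℝ} (ha : 0 ≤ a) (hab : a < b) :
    (b - a) * Real.log (b - a) ≤ b * Real.log b - a * Real.log a := by
  have hb0 : 0 < b := lt_of_le_of_lt ha hab
  have h2 : (b - a) * Real.log (b - a) ≤ (b - a) * Real.log b :=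
    mul_le_mul_of_nonneg_left (Real.log_le_log (by linarith) (by linarith)) (by linarith)
  have h1 : a * Real.log a ≤ a * Real.log b := by
    rcases eq_or_lt_of_le ha with h | h
    · rw [← h]; simp
    · exact mul_le_mul_of_nonneg_left (Real.log_le_log h hab.le) ha
  have h6 : b * Real.log b = a * Real.log b + (b - a) * Real.log b := by ring
  linarith

lemma main_half {a b : ℝ} (ha0 : 0 ≤ a) (hab : a ≤ b) (hb1 : b ≤ 1) :
    |b * Real.log b - a * Real.log a| ≤ phi (b - a) := by
  unfold phi
  split_ifs with h1 h2
  · have : a = b := by linarith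
    simp [this]
  · have ht : 0 < b - a := lt_of_le_of_ne (by linarith) (Ne.symm h1)
    have hup : b * Real.log b - a * Real.log a ≤ b - a := key_upper ha0 (by linarith) hb1
    have hlo : (b - a) * Real.log (b - a) ≤ b * Real.log b - a * Real.log a :=
      key_lower ha0 (by linarith)
    have hlt : Real.log (b - a) < -1 := by
      have := Real.log_lt_log ht h2
      rw [Real.log_div one_ne_zero (Real.exp_ne_zero 1), Real.log_one, Real.log_exp] at this
      linarith
    have ht2 : b - a ≤ -(b - a) * Real.log (b - a) := by nlinarith
    rw [abs_le]
    constructor <;> nlinarith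
  · have hfa1 := f_nonpos ha0 (le_trans hab hb1)
    have hfa2 := f_ge ha0
    have hfb1 := f_nonpos (le_trans ha0 hab) hb1
    have hfb2 := f_ge (le_trans ha0 hab)
    rw [abs_le]
    constructor <;> linarith

/-- For all `a, b ∈ [0,1]`, `|a log a − b log b| ≤ φ(|a − b|)` (with the
convention `0 · log 0 = 0`, which holds automatically since `Real.log 0 = 0`). -/
theorem abs_mul_log_sub_mul_log_le_phi
    (a b : ℝ) (ha : a ∈ Set.Icc (0 : ℝ) 1) (hb : b ∈ Set.Icc (0 : ℝ) 1) :
    |a * Real.log a - b * Real.log b| ≤ phi |a - b| := by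
  obtain ⟨ha0, ha1⟩ := ha
  obtain ⟨hb0, hb1⟩ := hb
  rcases le_total a b with h | h
  · rw [abs_sub_comm a b, abs_of_nonneg (by linarith : (0:ℝ) ≤ b - a),
      abs_sub_comm]
    exact main_half ha0 h hb1
  · rw [abs_of_nonneg (by linarith : (0:ℝ) ≤ a - b)]
    exact main_half hb0 h ha1
end

section
/- (Robustness of the max-weight spanning tree / Chow-Liu step.) Let V be a finite set with at least two elements, let w, ŵ : V × V → ℝ be symmetric weight functions, and let T be a spanning tree on V (a connected acyclic simple graph with vertex set V). Let ϑ > 0 and suppose: (i) for every pair of distinct vertices a, b that are not adjacent in T and every edge (u, v) lying on the unique path in T from a to b, one has w(u, v) − w(a, b) ≥ ϑ; and (ii) for every pair of distinct vertices a, b, |ŵ(a, b) − w(a, b)| < ϑ/2. Then T is the unique maximum-weight spanning tree for the weights ŵ: for every spanning tree T' on V with T' ≠ T, ∑_{(u,v) ∈ E(T)} ŵ(u, v) > ∑_{(u,v) ∈ E(T')} ŵ(u, v). -/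
open Finset

private lemma chowliu_reach_aux {V : Type*} {G : SimpleGraph V} (a b : V) :
    ∀ {x y : V}, G.Walk x y →
      (G.deleteEdges {s(a,b)}).Reachable x y ∨
      ((G.deleteEdges {s(a,b)}).Reachable x a ∧ (G.deleteEdges {s(a,b)}).Reachable b y) ∨
      ((G.deleteEdges {s(a,b)}).Reachable x b ∧ (G.deleteEdges {s(a,b)}).Reachable a y) := by
  intro x y q
  induction q with
  | nil => exact Or.inl (SimpleGraph.Reachable.refl _)
  | @cons x z y h q ih =>
    by_cases he : s(x, z) = s(a, b)
    · rw [Sym2.eq_iff] at he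
      rcases he with ⟨rfl, rfl⟩ | ⟨rfl, rfl⟩
      · rcases ih with h1 | ⟨h1, h2⟩ | ⟨h1, h2⟩
        · exact Or.inr (Or.inl ⟨SimpleGraph.Reachable.refl _, h1⟩)
        · exact Or.inl (h1.symm.trans h2)
        · exact Or.inl h2
      · rcases ih with h1 | ⟨h1, h2⟩ | ⟨h1, h2⟩
        · exact Or.inr (Or.inr ⟨SimpleGraph.Reachable.refl _, h1⟩)
        · exact Or.inl h2
        · exact Or.inl (h1.symm.trans h2)
    · have hedge : (G.deleteEdges {s(a,b)}).Adj x z := by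
        simp only [SimpleGraph.deleteEdges_adj, Set.mem_singleton_iff]
        exact ⟨h, he⟩
      rcases ih with h1 | ⟨h1, h2⟩ | ⟨h1, h2⟩
      · exact Or.inl (hedge.reachable.trans h1)
      · exact Or.inr (Or.inl ⟨hedge.reachable.trans h1, h2⟩)
      · exact Or.inr (Or.inr ⟨hedge.reachable.trans h1, h2⟩)

private lemma chowliu_tree_eq_of_subset {V : Type*} [Fintype V]
    {T T' : SimpleGraph V} (hT : T.IsTree) (hT' : T'.IsTree)
    (h : T'.edgeSet ⊆ T.edgeSet) : T' = T := by
  classical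
  haveI : Fintype T.edgeSet := (Set.toFinite _).fintype
  haveI : Fintype T'.edgeSet := (Set.toFinite _).fintype
  have hc := hT.card_edgeFinset
  have hc' := hT'.card_edgeFinset
  have hsub : T'.edgeFinset ⊆ T.edgeFinset := by
    intro e he
    rw [SimpleGraph.mem_edgeFinset] at he ⊢
    exact h he
  have := Finset.eq_of_subset_of_card_le hsub (by omega)
  rw [← SimpleGraph.edgeSet_inj]
  ext e
  rw [← SimpleGraph.mem_edgeFinset, ← SimpleGraph.mem_edgeFinset, this]

/-- **Robustness of the max-weight spanning tree (Chow-Liu) step.**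
Let `w, ŵ` be symmetric edge weights on a finite vertex set `V` with at least two
elements, and let `T` be a spanning tree.  Suppose (i) for all distinct non-adjacent
`a, b` and every edge `(u,v)` on the unique path in `T` from `a` to `b` we have
`w u v − w a b ≥ ϑ`, and (ii) `|ŵ a b − w a b| < ϑ/2` for all distinct `a, b`.
Then `T` is the unique maximum-weight spanning tree for `ŵ`: every spanning tree
`T' ≠ T` has strictly smaller `ŵ`-weight. -/
theorem chow_liu_tree_robustness
    {V : Type*} [Fintype V] (hV : 1 < Fintype.card V)
    (w what : V → V → ℝ)
    (hw : ∀ a b, w a b = w b a) (hwhat : ∀ a b, what a b = what b a)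
    (T : SimpleGraph V) (hT : T.IsTree)
    (ϑ : ℝ) (hϑ : 0 < ϑ)
    (hsep : ∀ a b : V, a ≠ b → ¬ T.Adj a b →
      ∀ (P : T.Walk a b), P.IsPath →
        ∀ u v : V, s(u, v) ∈ P.edges → w u v - w a b ≥ ϑ)
    (hest : ∀ a b : V, a ≠ b → |what a b - w a b| < ϑ / 2) :
    ∀ T' : SimpleGraph V, T'.IsTree → T' ≠ T →
      ∑ e ∈ T'.edgeSet.toFinite.toFinset, Sym2.lift ⟨what, hwhat⟩ e
        < ∑ e ∈ T.edgeSet.toFinite.toFinset, Sym2.lift ⟨what, hwhat⟩ e := by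
  classical
  have hFmem : ∀ (G : SimpleGraph V) (e : Sym2 V),
      e ∈ G.edgeSet.toFinite.toFinset ↔ e ∈ G.edgeSet := by
    intro G e; exact Set.Finite.mem_toFinset _
  have main : ∀ (n : ℕ) (T' : SimpleGraph V), T'.IsTree → T' ≠ T →
      (T'.edgeSet.toFinite.toFinset \ T.edgeSet.toFinite.toFinset).card ≤ n →
      ∑ e ∈ T'.edgeSet.toFinite.toFinset, Sym2.lift ⟨what, hwhat⟩ e
        < ∑ e ∈ T.edgeSet.toFinite.toFinset, Sym2.lift ⟨what, hwhat⟩ e := by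
    intro n
    induction n with
    | zero =>
      intro T' hT' hne hcard
      exfalso
      apply hne
      apply chowliu_tree_eq_of_subset hT hT'
      intro e he
      by_contra heT
      have : e ∈ T'.edgeSet.toFinite.toFinset \ T.edgeSet.toFinite.toFinset := by
        rw [Finset.mem_sdiff, hFmem, hFmem]; exact ⟨he, heT⟩
      have := Finset.card_pos.mpr ⟨e, this⟩
      omega
    | succ n ih =>
      intro T' hT' hne hcard
      -- find an edge of T' not in T
      have hdiff : ∃ e, e ∈ T'.edgeSet ∧ e ∉ T.edgeSet := by
        by_contra hc
        push_neg at hc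
        exact hne (chowliu_tree_eq_of_subset hT hT' hc)
      obtain ⟨e', he'mem, he'not⟩ := hdiff
      induction e' using Sym2.ind with
      | _ a b =>
      rw [SimpleGraph.mem_edgeSet] at he'mem
      have hTab : ¬ T.Adj a b := fun h => he'not ((SimpleGraph.mem_edgeSet _).mpr h)
      have hab : a ≠ b := he'mem.ne
      set G₀ := T'.deleteEdges {s(a,b)} with hG₀
      set S : Set V := {x | G₀.Reachable a x} with hS
      have haS : a ∈ S := SimpleGraph.Reachable.refl _
      have hbS : b ∉ S := by
        have hbr := (SimpleGraph.isAcyclic_iff_forall_adj_isBridge.mp hT'.2) he'mem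
        rw [SimpleGraph.isBridge_iff] at hbr
        exact hbr
      obtain ⟨P, hP, -⟩ := hT.existsUnique_path a b
      obtain ⟨d, hd, hdS, hdS'⟩ := P.exists_boundary_dart S haS hbS
      set u := d.fst with hu
      set v := d.snd with hv
      have hTuv : T.Adj u v := d.adj
      have huvne : u ≠ v := hTuv.ne
      have huv_mem : s(u, v) ∈ P.edges := by
        have : d.edge ∈ P.edges := List.mem_map_of_mem hd
        simpa [SimpleGraph.Dart.edge] using this
      have huvT' : s(u, v) ∉ T'.edgeSet := by
        intro hmem
        rw [SimpleGraph.mem_edgeSet] at hmem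
        by_cases he : s(u, v) = s(a, b)
        · rw [Sym2.eq_iff] at he
          rcases he with ⟨rfl, rfl⟩ | ⟨rfl, rfl⟩
          · exact hTab hTuv
          · exact hTab hTuv.symm
        · have : G₀.Adj u v := by
            simp only [hG₀, SimpleGraph.deleteEdges_adj, Set.mem_singleton_iff]
            exact ⟨hmem, he⟩
          exact hdS' (hdS.trans this.reachable)
      have hne_e : s(u, v) ≠ s(a, b) := by
        intro h; rw [h] at huvT'; exact huvT' ((SimpleGraph.mem_edgeSet _).mpr he'mem)
      set T₂ : SimpleGraph V := G₀ ⊔ SimpleGraph.fromEdgeSet {s(u, v)} with hT₂def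
      have hT₂edges : T₂.edgeSet = (T'.edgeSet \ {s(a,b)}) ∪ {s(u,v)} := by
        rw [hT₂def, SimpleGraph.edgeSet_sup, hG₀, SimpleGraph.edgeSet_deleteEdges,
          SimpleGraph.edgeSet_fromEdgeSet]
        congr 1
        ext e
        simp only [Set.mem_diff, Set.mem_singleton_iff, Set.mem_setOf_eq]
        constructor
        · exact fun h => h.1
        · rintro rfl
          exact ⟨rfl, by simp [Sym2.isDiag_iff_proj_eq, huvne]⟩
      have h₂le : G₀ ≤ T₂ := le_sup_left
      have hx : ∀ x, G₀.Reachable a x ∨ G₀.Reachable b x := by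
        intro x
        obtain ⟨q⟩ := hT'.isConnected.preconnected a x
        rcases chowliu_reach_aux a b q with h | ⟨h1, h2⟩ | ⟨h1, h2⟩
        · exact Or.inl h
        · exact Or.inr h2
        · exact absurd h1 hbS
      have hvb : G₀.Reachable b v := by
        rcases hx v with h | h
        · exact absurd h hdS'
        · exact h
      have huvT₂ : T₂.Adj u v := by
        rw [hT₂def, SimpleGraph.sup_adj]
        exact Or.inr ((SimpleGraph.fromEdgeSet_adj _).mpr ⟨rfl, huvne⟩)
      have hconn : T₂.Connected := by
        rw [SimpleGraph.connected_iff]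
        refine ⟨?_, Fintype.card_pos_iff.mp (by omega)⟩
        have hto : ∀ x, T₂.Reachable x u := by
          intro x
          rcases hx x with h | h
          · exact ((h.mono h₂le).symm).trans ((hdS.mono h₂le))
          · exact ((h.mono h₂le).symm).trans ((hvb.mono h₂le).trans huvT₂.symm.reachable)
        intro x y
        exact (hto x).trans (hto y).symm
      have hbridge : ¬ (T₂ \ SimpleGraph.fromEdgeSet {s(u, v)}).Reachable u v := by
        rintro ⟨q⟩
        have hsub : (T₂ \ SimpleGraph.fromEdgeSet {s(u,v)}).edgeSet ⊆ G₀.edgeSet := by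
          rw [SimpleGraph.edgeSet_sdiff, SimpleGraph.edgeSet_fromEdgeSet, hT₂edges,
            hG₀, SimpleGraph.edgeSet_deleteEdges]
          intro e he
          obtain ⟨h1, h2⟩ := he
          rcases h1 with h1 | h1
          · exact h1
          · refine absurd ⟨h1, ?_⟩ h2
            rw [Set.mem_singleton_iff] at h1
            subst h1
            simp [Sym2.isDiag_iff_proj_eq, huvne]
        have hreach : G₀.Reachable u v :=
          ⟨q.transfer G₀ (fun e he => hsub (q.edges_subset_edgeSet he))⟩
        exact hdS' (hdS.trans hreach)
      have hacyc : T₂.IsAcyclic := by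
        intro r c hc
        by_cases hmem : s(u, v) ∈ c.edges
        · have hbr : T₂.IsBridge s(u, v) := SimpleGraph.isBridge_iff.mpr hbridge
          exact hbr.notMem_edges_of_isCycle hc hmem
        · have hsub : ∀ e ∈ c.edges, e ∈ T'.edgeSet := by
            intro e he
            have h1 : e ∈ T₂.edgeSet := c.edges_subset_edgeSet he
            rw [hT₂edges] at h1
            rcases h1 with h1 | h1
            · exact h1.1
            · exact absurd (h1 ▸ he) hmem
          exact hT'.2 (c.transfer T' hsub) (hc.transfer hsub)
      have hT₂tree : T₂.IsTree := ⟨hconn, hacyc⟩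
      -- finset identities
      have hFT₂ : T₂.edgeSet.toFinite.toFinset
          = insert s(u,v) ((T'.edgeSet.toFinite.toFinset).erase s(a,b)) := by
        ext e
        rw [hFmem, hT₂edges]
        simp only [Set.mem_union, Set.mem_diff, Set.mem_singleton_iff, Finset.mem_insert,
          Finset.mem_erase, hFmem]
        tauto
      have hsuv_not : s(u,v) ∉ (T'.edgeSet.toFinite.toFinset).erase s(a,b) := by
        simp only [Finset.mem_erase, hFmem]
        exact fun h => huvT' h.2
      have hsab_mem : s(a,b) ∈ T'.edgeSet.toFinite.toFinset := by
        rw [hFmem]; exact (SimpleGraph.mem_edgeSet _).mpr he'mem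
      -- weight comparison
      have hwineq : what a b < what u v := by
        have h1 := hsep a b hab hTab P hP u v huv_mem
        have h2 := hest a b hab
        have h3 := hest u v huvne
        rw [abs_lt] at h2 h3
        linarith [h2.1, h2.2, h3.1, h3.2]
      have hstep : ∑ e ∈ T'.edgeSet.toFinite.toFinset, Sym2.lift ⟨what, hwhat⟩ e
          < ∑ e ∈ T₂.edgeSet.toFinite.toFinset, Sym2.lift ⟨what, hwhat⟩ e := by
        rw [hFT₂, Finset.sum_insert hsuv_not,
          ← Finset.add_sum_erase _ _ hsab_mem]
        simp only [Sym2.lift_mk]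
        exact add_lt_add_of_lt_of_le hwineq le_rfl
      -- cardinality decreases
      have hdiffeq : T₂.edgeSet.toFinite.toFinset \ T.edgeSet.toFinite.toFinset
          = (T'.edgeSet.toFinite.toFinset \ T.edgeSet.toFinite.toFinset).erase s(a,b) := by
        ext e
        simp only [Finset.mem_sdiff, hFT₂, Finset.mem_insert, Finset.mem_erase, hFmem]
        constructor
        · rintro ⟨rfl | ⟨h1, h2⟩, h3⟩
          · exact absurd ((SimpleGraph.mem_edgeSet T).mpr hTuv) h3
          · exact ⟨h1, h2, h3⟩
        · rintro ⟨h1, h2, h3⟩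
          exact ⟨Or.inr ⟨h1, h2⟩, h3⟩
      have hsab_diff : s(a,b) ∈ T'.edgeSet.toFinite.toFinset \ T.edgeSet.toFinite.toFinset := by
        rw [Finset.mem_sdiff, hFmem, hFmem]
        exact ⟨(SimpleGraph.mem_edgeSet _).mpr he'mem, he'not⟩
      have hcard₂ : (T₂.edgeSet.toFinite.toFinset \ T.edgeSet.toFinite.toFinset).card ≤ n := by
        rw [hdiffeq, Finset.card_erase_of_mem hsab_diff]
        have := Finset.card_pos.mpr ⟨_, hsab_diff⟩
        omega
      by_cases hT₂T : T₂ = T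
      · rw [hT₂T] at hstep
        exact hstep
      · exact hstep.trans (ih T₂ hT₂tree hT₂T hcard₂)
  intro T' hT' hne
  exact main _ T' hT' hne le_rfl
end

section
/- (Eigenvalue and eigenvector perturbation for diagonalizable matrices.) Let k ≥ 1 and let A be a k × k real matrix that is diagonalizable with k distinct real eigenvalues λ₁, …, λ_k corresponding to right eigenvectors ξ₁, …, ξ_k with ‖ξ_i‖₂ = 1; let R be the (invertible) k × k matrix whose i-th column is ξ_i. Let Â be any k × k real matrix, and set ε_A := ‖Â − A‖₂, γ_A := min_{i ≠ j} |λ_i − λ_j|, and ε₃ := κ(R) · ε_A / γ_A. Assume ε₃ < 1/2. Then there exists a permutation τ of {1, …, k} such that: (1) Â has k distinct real eigenvalues λ̂₁, …, λ̂_k, and |λ̂_{τ(i)} − λ_i| ≤ ε₃ · γ_A for all i; (2) Â has corresponding right eigenvectors ξ̂₁, …, ξ̂_k with ‖ξ̂_i‖₂ = 1 which satisfy ‖ξ̂_{τ(i)} − ξ_i‖₂ ≤ 4(k−1) · ‖R⁻¹‖₂ · ε₃ for all i; and (3) the matrix R̂ whose i-th column is ξ̂_{τ(i)} satisfies ‖R̂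 − R‖_F ≤ 4 k^{1/2} (k−1) · ‖R⁻¹‖₂ · ε₃. -/
open Finset

/-- The Euclidean (`ℓ₂`) norm of a real vector. -/
noncomputable def vecNorm {k : ℕ} (v : Fin k → ℝ) : ℝ :=
  Real.sqrt (∑ i, v i ^ 2)

/-- The operator norm of a real matrix induced by the Euclidean norms. -/
noncomputable def l2OpNorm {m n : ℕ} (A : Matrix (Fin m) (Fin n) ℝ) : ℝ :=
  ‖LinearMap.toContinuousLinearMap (Matrix.toEuclideanLin A)‖

/-- The Frobenius norm of a real matrix. -/
noncomputable def frobNorm {m n : ℕ} (A : Matrix (Fin m) (Fin n) ℝ) : ℝ :=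
  Real.sqrt (∑ i, ∑ j, A i j ^ 2)

open scoped Matrix.Norms.L2Operator

lemma l2OpNorm_eq {m n : ℕ} (A : Matrix (Fin m) (Fin n) ℝ) : l2OpNorm A = ‖A‖ := rfl
lemma l2OpNorm_nonneg {m n : ℕ} (A : Matrix (Fin m) (Fin n) ℝ) : 0 ≤ l2OpNorm A :=
  norm_nonneg _
lemma vecNorm_eq {k : ℕ} (v : Fin k → ℝ) :
    vecNorm v = ‖(WithLp.equiv 2 (Fin k → ℝ)).symm v‖ := by
  rw [EuclideanSpace.norm_eq]; simp [vecNorm, sq_abs]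
lemma vecNorm_mulVec_le {m n : ℕ} (A : Matrix (Fin m) (Fin n) ℝ) (v : Fin n → ℝ) :
    vecNorm (A.mulVec v) ≤ l2OpNorm A * vecNorm v := by
  rw [vecNorm_eq, vecNorm_eq, l2OpNorm_eq]; exact A.l2_opNorm_mulVec _
lemma vecNorm_nonneg {k : ℕ} (v : Fin k → ℝ) : 0 ≤ vecNorm v := Real.sqrt_nonneg _
lemma sq_vecNorm {k : ℕ} (v : Fin k → ℝ) : vecNorm v ^ 2 = ∑ i, v i ^ 2 :=
  Real.sq_sqrt (by positivity)
lemma abs_coord_le_vecNorm {k : ℕ} (v : Fin k → ℝ) (j : Fin k) : |v j| ≤ vecNorm v := by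
  rw [← Real.sqrt_sq_eq_abs]
  exact Real.sqrt_le_sqrt (Finset.single_le_sum (f := fun i => v i ^ 2)
    (fun i _ => sq_nonneg _) (mem_univ j))
lemma vecNorm_smul {k : ℕ} (a : ℝ) (v : Fin k → ℝ) :
    vecNorm (a • v) = |a| * vecNorm v := by
  simp only [vecNorm, Pi.smul_apply, smul_eq_mul, mul_pow, ← Finset.mul_sum]
  rw [Real.sqrt_mul (sq_nonneg a), Real.sqrt_sq_eq_abs]
lemma vecNorm_sum_le {k : ℕ} (c : Fin k → ℝ) (u : Fin k → Fin k → ℝ) :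
    vecNorm (∑ j, c j • u j) ≤ ∑ j, |c j| * vecNorm (u j) := by
  have hL : ∀ w : Fin k → ℝ, vecNorm w = ‖(WithLp.linearEquiv 2 ℝ (Fin k → ℝ)).symm w‖ :=
    fun w => vecNorm_eq w
  rw [hL, map_sum]
  refine (norm_sum_le _ _).trans (le_of_eq (Finset.sum_congr rfl fun j _ => ?_))
  rw [map_smul, norm_smul, Real.norm_eq_abs, hL]

lemma bauer_fike {k : ℕ} (lam : Fin k → ℝ) (F : Matrix (Fin k) (Fin k) ℝ) (ε ν : ℝ)
    (hF : l2OpNorm F ≤ ε) (u : Fin k → ℝ) (hu : u ≠ 0)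
    (h : (Matrix.diagonal lam + F).mulVec u = ν • u) : ∃ j, |ν - lam j| ≤ ε := by
  by_contra hcon
  push_neg at hcon
  have hε0 : 0 ≤ ε := le_trans (l2OpNorm_nonneg F) hF
  have hco : ∀ j, F.mulVec u j = (ν - lam j) * u j := by
    intro j
    have := congrFun h j
    simp only [Matrix.add_mulVec, Matrix.mulVec_diagonal, Pi.add_apply, Pi.smul_apply,
      smul_eq_mul] at this
    linarith
  obtain ⟨j0, hj0⟩ := Function.ne_iff.mp hu
  have key : ∀ j, ε ^ 2 ≤ (ν - lam j) ^ 2 := by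
    intro j
    calc ε ^ 2 ≤ |ν - lam j| ^ 2 := by
          have := (hcon j).le
          nlinarith
      _ = (ν - lam j) ^ 2 := sq_abs _
  have keys : ε ^ 2 < (ν - lam j0) ^ 2 := by
    calc ε ^ 2 < |ν - lam j0| ^ 2 := by nlinarith [hcon j0]
      _ = (ν - lam j0) ^ 2 := sq_abs _
  have hlt : ∑ j, ε ^ 2 * u j ^ 2 < ∑ j, ((ν - lam j) * u j) ^ 2 := by
    apply Finset.sum_lt_sum
    · intro j _
      calc ε ^2 * u j ^2 ≤ (ν - lam j)^2 * u j ^2 :=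
            mul_le_mul_of_nonneg_right (key j) (sq_nonneg _)
        _ = ((ν - lam j) * u j)^2 := by ring
    · refine ⟨j0, mem_univ j0, ?_⟩
      have h2 : 0 < u j0 ^ 2 := by
        have := sq_abs (u j0)
        nlinarith [abs_pos.mpr hj0]
      calc ε ^2 * u j0^2 < (ν - lam j0)^2 * u j0^2 := mul_lt_mul_of_pos_right keys h2
        _ = ((ν - lam j0) * u j0)^2 := by ring
  have hle : ∑ j, ((ν - lam j) * u j) ^ 2 ≤ ε ^ 2 * ∑ j, u j ^ 2 := by
    have h1 : vecNorm (F.mulVec u) ≤ ε * vecNorm u :=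
      (vecNorm_mulVec_le F u).trans (mul_le_mul_of_nonneg_right hF (vecNorm_nonneg u))
    have h2 : vecNorm (F.mulVec u) ^ 2 ≤ (ε * vecNorm u) ^ 2 := by
      nlinarith [vecNorm_nonneg (F.mulVec u)]
    rw [sq_vecNorm] at h2
    calc ∑ j, ((ν - lam j) * u j) ^ 2 = ∑ j, (F.mulVec u) j ^2 :=
          Finset.sum_congr rfl fun j _ => by rw [hco j]
      _ ≤ (ε * vecNorm u)^2 := h2
      _ = ε^2 * ∑ j, u j ^2 := by rw [mul_pow, sq_vecNorm]
  rw [← Finset.mul_sum] at hlt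
  linarith

lemma det_ne_zero_of_cols {k : ℕ} (v : Fin k → Fin k → ℝ) (hv : LinearIndependent ℝ v) :
    (Matrix.of fun i j => v j i).det ≠ 0 := by
  intro h
  obtain ⟨c, hc, hc0⟩ := (Matrix.exists_mulVec_eq_zero_iff).mpr h
  apply hc
  have := Fintype.linearIndependent_iff.mp hv c ?_
  · funext j; exact this j
  · funext i
    have := congrFun hc0 i
    simpa [Matrix.mulVec, dotProduct, Finset.sum_apply, mul_comm] using this

lemma eig_indep {k : ℕ} (B : Matrix (Fin k) (Fin k) ℝ) (μ : Fin k → ℝ)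
    (hμ : Function.Injective μ) (v : Fin k → Fin k → ℝ) (hv : ∀ i, v i ≠ 0)
    (h : ∀ i, B.mulVec (v i) = μ i • v i) : LinearIndependent ℝ v :=
  Module.End.eigenvectors_linearIndependent' (Matrix.mulVecLin B) μ hμ v
    (fun i => ⟨Module.End.mem_eigenspace_iff.mpr (by simpa using h i), hv i⟩)

lemma l2OpNorm_smul {m n : ℕ} (a : ℝ) (A : Matrix (Fin m) (Fin n) ℝ) :
    l2OpNorm (a • A) = |a| * l2OpNorm A := by
  rw [l2OpNorm_eq, l2OpNorm_eq, norm_smul, Real.norm_eq_abs]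

lemma l2OpNorm_mul_le {k : ℕ} (A B : Matrix (Fin k) (Fin k) ℝ) :
    l2OpNorm (A * B) ≤ l2OpNorm A * l2OpNorm B := A.l2_opNorm_mul B

lemma vecNorm_pos {k : ℕ} (v : Fin k → ℝ) (hv : v ≠ 0) : 0 < vecNorm v := by
  obtain ⟨l0, hl0⟩ := Function.ne_iff.mp hv
  apply Real.sqrt_pos.mpr
  exact Finset.sum_pos' (fun l _ => sq_nonneg _)
    ⟨l0, mem_univ l0, by nlinarith [abs_pos.mpr hl0, sq_abs (v l0)]⟩

lemma vecNorm_add_le {k : ℕ} (x y : Fin k → ℝ) : vecNorm (x + y) ≤ vecNorm x + vecNorm y := by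
  rw [vecNorm_eq, vecNorm_eq, vecNorm_eq]
  rw [show ((WithLp.equiv 2 (Fin k → ℝ)).symm (x + y) : EuclideanSpace ℝ (Fin k))
      = (WithLp.equiv 2 (Fin k → ℝ)).symm x + (WithLp.equiv 2 (Fin k → ℝ)).symm y from
    map_add ((WithLp.linearEquiv 2 ℝ (Fin k → ℝ)).symm) x y]
  exact norm_add_le _ _

lemma abs_vecNorm_sub_vecNorm_le {k : ℕ} (x y : Fin k → ℝ) :
    |vecNorm x - vecNorm y| ≤ vecNorm (x - y) := by
  have : (WithLp.linearEquiv 2 ℝ (Fin k → ℝ)).symm (x - y)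
      = (WithLp.linearEquiv 2 ℝ (Fin k → ℝ)).symm x
        - (WithLp.linearEquiv 2 ℝ (Fin k → ℝ)).symm y := map_sub _ _ _
  rw [vecNorm_eq, vecNorm_eq, vecNorm_eq]
  rw [show ((WithLp.equiv 2 (Fin k → ℝ)).symm (x - y) : EuclideanSpace ℝ (Fin k))
      = (WithLp.equiv 2 (Fin k → ℝ)).symm x - (WithLp.equiv 2 (Fin k → ℝ)).symm y from this]
  exact abs_norm_sub_norm_le _ _

lemma vecNorm_finset_sum_le {k : ℕ} {ι : Type*} (s : Finset ι) (c : ι → ℝ)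
    (u : ι → Fin k → ℝ) :
    vecNorm (∑ j ∈ s, c j • u j) ≤ ∑ j ∈ s, |c j| * vecNorm (u j) := by
  have hL : ∀ w : Fin k → ℝ, vecNorm w = ‖(WithLp.linearEquiv 2 ℝ (Fin k → ℝ)).symm w‖ :=
    fun w => vecNorm_eq w
  rw [hL, map_sum]
  refine (norm_sum_le _ _).trans (le_of_eq (Finset.sum_congr rfl fun j _ => ?_))
  rw [map_smul, norm_smul, Real.norm_eq_abs, hL]

lemma homotopy {k : ℕ} (lam : Fin k → ℝ) (E : Matrix (Fin k) (Fin k) ℝ) (γ δ : ℝ)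
    (hγ : 0 < γ) (hδ0 : 0 ≤ δ) (hδγ : 2 * δ < γ) (hE : l2OpNorm E ≤ δ)
    (hgap : ∀ i j, i ≠ j → γ ≤ |lam i - lam j|) :
    ∃ (μ : Fin k → ℝ) (v : Fin k → Fin k → ℝ), ∀ i,
      (Matrix.diagonal lam + E).mulVec (v i) = μ i • v i ∧ (∑ l, v i l ^ 2 = 1) ∧
      |μ i - lam i| ≤ δ := by
  classical
  set X := ℝ × (Fin k → ℝ) × (Fin k → Fin k → ℝ) with hX
  set M : ℝ → Matrix (Fin k) (Fin k) ℝ := fun t => Matrix.diagonal lam + t • E with hM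
  set Z : Set X := {z | z.1 ∈ Set.Icc (0:ℝ) 1 ∧ ∀ i,
      ((M z.1).mulVec (z.2.2 i) = z.2.1 i • z.2.2 i ∧ (∑ l, z.2.2 i l ^ 2 = 1) ∧
        |z.2.1 i - lam i| ≤ z.1 * δ)} with hZ
  set S : Set ℝ := Prod.fst '' Z with hS
  have hmemS : ∀ t : ℝ, t ∈ S ↔ (t ∈ Set.Icc (0:ℝ) 1 ∧ ∃ (μ : Fin k → ℝ)
      (v : Fin k → Fin k → ℝ), ∀ i,
      ((M t).mulVec (v i) = μ i • v i ∧ (∑ l, v i l ^ 2 = 1) ∧ |μ i - lam i| ≤ t * δ)) := by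
    intro t
    constructor
    · rintro ⟨⟨t', μ, v⟩, ⟨h1, h2⟩, rfl⟩
      exact ⟨h1, μ, v, h2⟩
    · rintro ⟨h1, μ, v, h2⟩
      exact ⟨(t, μ, v), ⟨h1, h2⟩, rfl⟩
  have hcontM : ∀ (i : Fin k), Continuous fun z : X => (M z.1).mulVec (z.2.2 i) := by
    intro i
    apply continuous_pi; intro j
    simp only [Matrix.mulVec, dotProduct, hM, Matrix.add_apply, Matrix.smul_apply,
      smul_eq_mul]
    apply continuous_finset_sum; intro l _
    exact ((continuous_const.add (continuous_fst.mul continuous_const)).mul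
      ((continuous_apply l).comp ((continuous_apply i).comp (continuous_snd.comp continuous_snd))))
  have hZclosed : IsClosed Z := by
    rw [hZ]
    simp only [Set.setOf_and, Set.setOf_forall]
    apply IsClosed.inter
    · exact IsClosed.preimage continuous_fst isClosed_Icc
    · apply isClosed_iInter; intro i
      refine IsClosed.inter ?_ (IsClosed.inter ?_ ?_)
      · exact isClosed_eq (hcontM i)
          (Continuous.smul ((continuous_apply i).comp (continuous_fst.comp continuous_snd))
            ((continuous_apply i).comp (continuous_snd.comp continuous_snd)))
      · exact isClosed_eq (continuous_finset_sum _ fun l _ =>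
          (((continuous_apply l).comp ((continuous_apply i).comp
            (continuous_snd.comp continuous_snd))).pow 2)) continuous_const
      · exact isClosed_le (Continuous.abs (Continuous.sub
          ((continuous_apply i).comp (continuous_fst.comp continuous_snd)) continuous_const))
          (continuous_fst.mul continuous_const)
  have hZsub : Z ⊆ (Set.Icc (0:ℝ) 1) ×ˢ ((Set.univ.pi fun i => Set.Icc (lam i - δ) (lam i + δ)) ×ˢ
      (Set.univ.pi fun _ => Set.univ.pi fun _ => Set.Icc (-1:ℝ) 1)) := by
    rintro ⟨t, μ, v⟩ ⟨ht, h⟩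
    refine ⟨ht, fun i _ => ?_, fun i _ => fun l _ => ?_⟩
    · have h3 := (h i).2.2
      have htd : t * δ ≤ δ := by nlinarith [ht.1, ht.2]
      have habs := abs_le.mp (le_trans h3 htd)
      exact Set.mem_Icc.mpr ⟨by linarith [habs.1], by linarith [habs.2]⟩
    · have h2 := (h i).2.1
      have hle : v i l ^ 2 ≤ 1 := by
        rw [← h2]
        exact Finset.single_le_sum (f := fun l => v i l ^ 2) (fun _ _ => sq_nonneg _) (mem_univ l)
      exact Set.mem_Icc.mpr ⟨by nlinarith, by nlinarith⟩
  have hScpt : IsCompact S := by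
    apply IsCompact.image _ continuous_fst
    exact IsCompact.of_isClosed_subset
      (IsCompact.prod isCompact_Icc (IsCompact.prod
        (isCompact_univ_pi fun i => isCompact_Icc)
        (isCompact_univ_pi fun _ => isCompact_univ_pi fun _ => isCompact_Icc)))
      hZclosed hZsub
  have h0S : (0:ℝ) ∈ S := by
    rw [hmemS]
    refine ⟨Set.mem_Icc.mpr ⟨le_refl _, zero_le_one⟩, lam, fun i => Pi.single i 1, fun i => ?_⟩
    refine ⟨?_, ?_, by simp⟩
    · funext j
      simp only [hM, zero_smul, add_zero, Matrix.mulVec_diagonal, Pi.smul_apply, smul_eq_mul,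
        Pi.single_apply]
      by_cases h : j = i <;> simp [h]
    · simp [Pi.single_apply, sq]
  have hSne : S.Nonempty := ⟨0, h0S⟩
  set T := sSup S with hT
  have hTS : T ∈ S := hScpt.sSup_mem hSne
  have hTIcc : T ∈ Set.Icc (0:ℝ) 1 := ((hmemS T).mp hTS).1
  -- openness step: T < 1 leads to a contradiction
  have hT1 : T = 1 := by
    by_contra hne
    have hTlt : T < 1 := lt_of_le_of_ne hTIcc.2 hne
    obtain ⟨_, μ, v, hP⟩ := (hmemS T).mp hTS
    have hvne : ∀ i, v i ≠ 0 := by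
      intro i hv0
      have := (hP i).2.1
      rw [hv0] at this
      simp at this
    have hgapμ : ∀ i j, i ≠ j → γ - 2 * δ ≤ |μ i - μ j| := by
      intro i j hij
      have h1 := (hP i).2.2
      have h2 := (hP j).2.2
      have h3 := hgap i j hij
      have htd : T * δ ≤ δ := by nlinarith [hTIcc.1, hTIcc.2]
      have e1 := abs_sub_abs_le_abs_sub (lam i - lam j) (lam i - μ i)
      -- |lam i - lam j| ≤ |lam i - μ i| + |μ i - μ j| + |μ j - lam j|
      have key : |lam i - lam j| ≤ |μ i - lam i| + |μ i - μ j| + |μ j - lam j| := by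
        have := abs_sub (lam i) (lam j)
        calc |lam i - lam j| = |(lam i - μ i) + (μ i - μ j) + (μ j - lam j)| := by ring_nf
          _ ≤ |lam i - μ i| + |μ i - μ j| + |μ j - lam j| := by
              refine le_trans (abs_add_le _ _) ?_
              have := abs_add_le (lam i - μ i) (μ i - μ j)
              linarith
          _ = |μ i - lam i| + |μ i - μ j| + |μ j - lam j| := by rw [abs_sub_comm]
      linarith [le_trans h1 htd, le_trans h2 htd]
    have hμinj : Function.Injective μ := by
      intro i j hij
      by_contra hne2
      have := hgapμ i j hne2
      rw [hij] at this
      simp at this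
      linarith
    have hindep : LinearIndependent ℝ v := eig_indep (M T) μ hμinj v hvne fun i => (hP i).1
    set V : Matrix (Fin k) (Fin k) ℝ := Matrix.of fun i j => v j i with hV
    have hVdet : V.det ≠ 0 := det_ne_zero_of_cols v hindep
    set ρ := (γ - 2 * δ) / 2 with hρdef
    have hρ : 0 < ρ := by rw [hρdef]; linarith
    set d : ℝ → ℝ → ℝ := fun s x => ((M s) - x • (1 : Matrix (Fin k) (Fin k) ℝ)).det with hd
    have hdT : ∀ x : ℝ, d T x = ∏ j, (μ j - x) := by
      intro x
      have hmm : ((M T) - x • (1 : Matrix (Fin k) (Fin k) ℝ)) * V =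
          V * Matrix.diagonal (fun j => μ j - x) := by
        funext i j
        have hc : ((M T) * V) i j = ((M T).mulVec (v j)) i := by
          simp [Matrix.mul_apply, Matrix.mulVec, dotProduct, hV]
        simp only [Matrix.sub_mul, Matrix.smul_mul, Matrix.one_mul, Matrix.sub_apply,
          Matrix.smul_apply, Matrix.mul_diagonal, smul_eq_mul]
        rw [hc, (hP j).1]
        simp [hV]
        ring
      have h2 := congrArg Matrix.det hmm
      rw [Matrix.det_mul, Matrix.det_mul, Matrix.det_diagonal, mul_comm] at h2
      exact mul_left_cancel₀ hVdet h2
    have hsign : ∀ i, d T (μ i - ρ) * d T (μ i + ρ) < 0 := by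
      intro i
      rw [hdT, hdT, ← Finset.prod_mul_distrib]
      have hform : ∀ j, (μ j - (μ i - ρ)) * (μ j - (μ i + ρ)) = (μ j - μ i) ^ 2 - ρ ^ 2 := by
        intro j; ring
      rw [Finset.prod_congr rfl fun j _ => hform j,
        ← Finset.mul_prod_erase _ _ (mem_univ i)]
      apply mul_neg_of_neg_of_pos
      · have : (μ i - μ i) ^ 2 - ρ ^ 2 = -ρ ^ 2 := by ring
        rw [this]
        nlinarith [hρ]
      · apply Finset.prod_pos
        intro j hj
        have hji : j ≠ i := Finset.ne_of_mem_erase hj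
        have habs : γ - 2 * δ ≤ |μ j - μ i| := hgapμ j i hji
        have h2ρ : γ - 2 * δ = 2 * ρ := by rw [hρdef]; ring
        nlinarith [sq_abs (μ j - μ i), abs_nonneg (μ j - μ i), hρ]
    have hdcont : ∀ x : ℝ, Continuous fun s => d s x := by
      intro x
      apply Continuous.matrix_det
      apply continuous_matrix
      intro a b
      simp only [hd, hM, Matrix.sub_apply, Matrix.add_apply, Matrix.smul_apply,
        Matrix.one_apply, smul_eq_mul]
      exact (continuous_const.add (continuous_id.mul continuous_const)).sub continuous_const
    have hdcont2 : ∀ s : ℝ, Continuous fun x => d s x := by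
      intro s
      apply Continuous.matrix_det
      apply continuous_matrix
      intro a b
      simp only [hd, hM, Matrix.sub_apply, Matrix.add_apply, Matrix.smul_apply,
        Matrix.one_apply, smul_eq_mul]
      exact continuous_const.sub (continuous_id.mul continuous_const)
    have hU : ∃ η > (0:ℝ), ∀ s : ℝ, |s - T| < η →
        ∀ i, d s (μ i - ρ) * d s (μ i + ρ) < 0 := by
      have hUopen : IsOpen (⋂ i, {s : ℝ | d s (μ i - ρ) * d s (μ i + ρ) < 0}) :=
        isOpen_iInter_of_finite fun i =>
          isOpen_lt ((hdcont _).mul (hdcont _)) continuous_const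
      have hTU : T ∈ ⋂ i, {s : ℝ | d s (μ i - ρ) * d s (μ i + ρ) < 0} :=
        Set.mem_iInter.mpr fun i => hsign i
      obtain ⟨η, hη, hball⟩ := Metric.isOpen_iff.mp hUopen T hTU
      refine ⟨η, hη, fun s hs i => ?_⟩
      exact Set.mem_iInter.mp (hball (by rwa [Metric.mem_ball, Real.dist_eq])) i
    obtain ⟨η, hη0, hηP⟩ := hU
    set t' := min 1 (T + η / 2) with ht'def
    have ht'T : T < t' := lt_min hTlt (by linarith)
    have ht'1 : t' ≤ 1 := min_le_left _ _
    have ht'0 : 0 ≤ t' := le_trans hTIcc.1 ht'T.le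
    have ht'close : |t' - T| < η := by
      have h1 : t' ≤ T + η / 2 := min_le_right _ _
      rw [abs_lt]
      constructor <;> linarith
    have hsign' := hηP t' ht'close
    have htd : T * δ ≤ δ := by nlinarith [hTIcc.1, hTIcc.2]
    have ht'd : t' * δ ≤ δ := by nlinarith
    have key : ∀ i, ∃ (ν : ℝ) (w : Fin k → ℝ), (M t').mulVec w = ν • w ∧
        (∑ l, w l ^ 2 = 1) ∧ |ν - lam i| ≤ t' * δ := by
      intro i
      have hi := hsign' i
      have hcont : ContinuousOn (fun x => d t' x) (Set.Icc (μ i - ρ) (μ i + ρ)) :=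
        (hdcont2 t').continuousOn
      have hle : μ i - ρ ≤ μ i + ρ := by linarith
      have hivt : ∃ ν ∈ Set.Ioo (μ i - ρ) (μ i + ρ), d t' ν = 0 := by
        rcases mul_neg_iff.mp hi with ⟨ha, hb⟩ | ⟨ha, hb⟩
        · have h0m : (0:ℝ) ∈ Set.Ioo (d t' (μ i + ρ)) (d t' (μ i - ρ)) := ⟨hb, ha⟩
          obtain ⟨ν, hν, hν0⟩ := intermediate_value_Ioo' hle hcont h0m
          exact ⟨ν, hν, hν0⟩
        · have h0m : (0:ℝ) ∈ Set.Ioo (d t' (μ i - ρ)) (d t' (μ i + ρ)) := ⟨ha, hb⟩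
          obtain ⟨ν, hν, hν0⟩ := intermediate_value_Ioo hle hcont h0m
          exact ⟨ν, hν, hν0⟩
      obtain ⟨ν, hν, hdν0⟩ := hivt
      obtain ⟨u, hu0, huv⟩ :=
        (Matrix.exists_mulVec_eq_zero_iff (M := M t' - ν • (1 : Matrix (Fin k) (Fin k) ℝ))).mpr
          hdν0
      have heq : (M t').mulVec u = ν • u := by
        have h1 : (M t' - ν • (1 : Matrix (Fin k) (Fin k) ℝ)).mulVec u =
            (M t').mulVec u - ν • u := by
          rw [Matrix.sub_mulVec, Matrix.smul_mulVec, Matrix.one_mulVec]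
        rw [h1] at huv
        exact sub_eq_zero.mp huv
      have hsum : 0 < ∑ l, u l ^ 2 := by
        obtain ⟨l0, hl0⟩ := Function.ne_iff.mp hu0
        exact Finset.sum_pos' (fun l _ => sq_nonneg _)
          ⟨l0, mem_univ l0, by nlinarith [abs_pos.mpr hl0, sq_abs (u l0)]⟩
      set n := Real.sqrt (∑ l, u l ^ 2) with hndef
      have hn : 0 < n := Real.sqrt_pos.mpr hsum
      have hn2 : n ^ 2 = ∑ l, u l ^ 2 := Real.sq_sqrt hsum.le
      refine ⟨ν, n⁻¹ • u, ?_, ?_, ?_⟩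
      · rw [Matrix.mulVec_smul, heq, smul_comm]
      · simp only [Pi.smul_apply, smul_eq_mul, mul_pow, ← Finset.mul_sum, inv_pow, hn2]
        rw [inv_mul_cancel₀ hsum.ne']
      · obtain ⟨j, hj⟩ := bauer_fike lam (t' • E) (t' * δ) ν
          (by rw [l2OpNorm_smul, abs_of_nonneg ht'0]
              exact mul_le_mul_of_nonneg_left hE ht'0) u hu0 heq
        by_cases hji : j = i
        · rwa [hji] at hj
        · exfalso
          have h1 := hgap i j (Ne.symm hji)
          have h2 := le_trans (hP i).2.2 htd
          have h3 : |ν - μ i| < ρ := by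
            rw [abs_lt]
            exact ⟨by linarith [hν.1], by linarith [hν.2]⟩
          have h4 := le_trans hj ht'd
          have htri : |lam i - lam j| ≤ |μ i - lam i| + |ν - μ i| + |ν - lam j| := by
            calc |lam i - lam j| = |(-(μ i - lam i)) + (-(ν - μ i)) + (ν - lam j)| := by
                  ring_nf
              _ ≤ |(-(μ i - lam i)) + (-(ν - μ i))| + |ν - lam j| := abs_add_le _ _
              _ ≤ |(-(μ i - lam i))| + |(-(ν - μ i))| + |ν - lam j| := by
                  linarith [abs_add_le (-(μ i - lam i)) (-(ν - μ i))]
              _ = |μ i - lam i| + |ν - μ i| + |ν - lam j| := by rw [abs_neg, abs_neg]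
          rw [hρdef] at h3
          linarith
    choose ν w hw1 hw2 hw3 using key
    have ht'S : t' ∈ S := (hmemS t').mpr
      ⟨⟨ht'0, ht'1⟩, ν, w, fun i => ⟨hw1 i, hw2 i, hw3 i⟩⟩
    have hle' := le_csSup hScpt.bddAbove ht'S
    rw [← hT] at hle'
    linarith
  obtain ⟨_, μ, v, hP⟩ := (hmemS 1).mp (hT1 ▸ hTS)
  refine ⟨μ, v, fun i => ⟨?_, (hP i).2.1, ?_⟩⟩
  · have h := (hP i).1
    simp only [hM, one_smul] at h
    exact h
  · have h := (hP i).2.2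
    rwa [one_mul] at h

/-- **Eigenvalue and eigenvector perturbation for diagonalizable matrices.**
Let `A` be a `k × k` real matrix with `k` distinct real eigenvalues `λ_i` and unit
right eigenvectors `ξ_i`, collected as the columns of the (invertible) matrix `R`.
Let `Â` be any `k × k` matrix, `ε_A = ‖Â − A‖₂`, `γ_A = min_{i≠j} |λ_i − λ_j|`
(encoded as a positive lower bound), and `ε₃ = κ(R) ε_A / γ_A < 1/2`.  Then there is
a permutation `τ` such that `Â` has `k` distinct real eigenvalues `λ̂_i` with unit
right eigenvectors `ξ̂_i` satisfying `|λ̂_{τ(i)} − λ_i| ≤ ε₃ γ_A`,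
`‖ξ̂_{τ(i)} − ξ_i‖₂ ≤ 4(k−1)‖R⁻¹‖₂ ε₃`, and the matrix `R̂` with columns `ξ̂_{τ(i)}`
satisfies `‖R̂ − R‖_F ≤ 4 √k (k−1) ‖R⁻¹‖₂ ε₃`. -/
theorem eigen_perturbation_diagonalizable
    {k : ℕ} (hk : 1 ≤ k)
    (A Ahat : Matrix (Fin k) (Fin k) ℝ)
    (lam : Fin k → ℝ) (xi : Fin k → Fin k → ℝ)
    (heig : ∀ i, A.mulVec (xi i) = lam i • xi i)
    (hunit : ∀ i, vecNorm (xi i) = 1)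
    (hdistinct : Function.Injective lam)
    (R : Matrix (Fin k) (Fin k) ℝ) (hRdef : R = Matrix.of fun i j => xi j i)
    (εA γA ε₃ : ℝ)
    (hεA : εA = l2OpNorm (Ahat - A))
    (hγpos : 0 < γA) (hγ : ∀ i j, i ≠ j → γA ≤ |lam i - lam j|)
    (hε₃ : ε₃ = (l2OpNorm R * l2OpNorm R⁻¹) * εA / γA)
    (hhalf : ε₃ < 1 / 2) :
    ∃ (τ : Equiv.Perm (Fin k)) (lamhat : Fin k → ℝ) (xihat : Fin k → Fin k → ℝ),
      Function.Injective lamhat ∧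
      (∀ i, Ahat.mulVec (xihat i) = lamhat i • xihat i) ∧
      (∀ i, vecNorm (xihat i) = 1) ∧
      (∀ i, |lamhat (τ i) - lam i| ≤ ε₃ * γA) ∧
      (∀ i, vecNorm (fun l => xihat (τ i) l - xi i l)
        ≤ 4 * ((k : ℝ) - 1) * l2OpNorm R⁻¹ * ε₃) ∧
      frobNorm ((Matrix.of fun i j => xihat (τ j) i) - R)
        ≤ 4 * Real.sqrt k * ((k : ℝ) - 1) * l2OpNorm R⁻¹ * ε₃ := by
  classical
  have hεA0 : 0 ≤ εA := hεA ▸ l2OpNorm_nonneg _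
  have hε30 : 0 ≤ ε₃ := by
    rw [hε₃]
    have := l2OpNorm_nonneg R
    have := l2OpNorm_nonneg R⁻¹
    positivity
  set δ := ε₃ * γA with hδdef
  have hδ0 : 0 ≤ δ := mul_nonneg hε30 hγpos.le
  have hδγ : 2 * δ < γA := by rw [hδdef]; nlinarith
  have hξne : ∀ i, xi i ≠ 0 := by
    intro i h0
    have h1 := hunit i
    rw [h0] at h1
    simp [vecNorm] at h1
  have hindep : LinearIndependent ℝ xi := eig_indep A lam hdistinct xi hξne heig
  have hRdet : R.det ≠ 0 := by rw [hRdef]; exact det_ne_zero_of_cols xi hindep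
  have hRu : IsUnit R.det := isUnit_iff_ne_zero.mpr hRdet
  have hRiR : R⁻¹ * R = 1 := Matrix.nonsing_inv_mul R hRu
  have hRRi : R * R⁻¹ = 1 := Matrix.mul_nonsing_inv R hRu
  set D := Matrix.diagonal lam with hD
  have hColR : ∀ (b : Fin k → ℝ) (l : Fin k), R.mulVec b l = ∑ j, b j * xi j l := by
    intro b l
    rw [hRdef]
    simp [Matrix.mulVec, dotProduct, mul_comm]
  have hAR : A * R = R * D := by
    funext i j
    have h1 : (A * R) i j = (A.mulVec (xi j)) i := by
      rw [hRdef]; simp [Matrix.mul_apply, Matrix.mulVec, dotProduct]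
    rw [h1, heig j, hD, Matrix.mul_diagonal, hRdef]
    simp [mul_comm]
  set E := R⁻¹ * (Ahat - A) * R with hEdef
  have hDE : D + E = R⁻¹ * Ahat * R := by
    have h1 : R⁻¹ * A * R = D := by rw [mul_assoc, hAR, ← mul_assoc, hRiR, one_mul]
    have h2 : E = R⁻¹ * Ahat * R - R⁻¹ * A * R := by
      rw [hEdef, Matrix.mul_sub, Matrix.sub_mul]
    rw [h2, h1]
    abel
  have hEnorm : l2OpNorm E ≤ δ := by
    have h1 : l2OpNorm E ≤ l2OpNorm (R⁻¹ * (Ahat - A)) * l2OpNorm R := l2OpNorm_mul_le _ _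
    have h2 : l2OpNorm (R⁻¹ * (Ahat - A)) ≤ l2OpNorm R⁻¹ * l2OpNorm (Ahat - A) :=
      l2OpNorm_mul_le _ _
    have hδeq : δ = l2OpNorm R * l2OpNorm R⁻¹ * εA := by
      rw [hδdef, hε₃]; field_simp
    rw [hδeq, hεA]
    calc l2OpNorm E ≤ (l2OpNorm R⁻¹ * l2OpNorm (Ahat - A)) * l2OpNorm R :=
          le_trans h1 (mul_le_mul_of_nonneg_right h2 (l2OpNorm_nonneg R))
      _ = l2OpNorm R * l2OpNorm R⁻¹ * l2OpNorm (Ahat - A) := by ring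
  obtain ⟨μ, v, hμv⟩ := homotopy lam E γA δ hγpos hδ0 hδγ hEnorm hγ
  have hμlam : ∀ i, |μ i - lam i| ≤ δ := fun i => (hμv i).2.2
  have hμinj : Function.Injective μ := by
    intro i j hij
    by_contra hne
    have h1 := hγ i j hne
    have h2 : |lam i - lam j| ≤ |μ i - lam i| + |μ j - lam j| := by
      calc |lam i - lam j| = |(μ j - lam j) + (-(μ i - lam i))| := by rw [← hij]; ring_nf
        _ ≤ |μ j - lam j| + |(-(μ i - lam i))| := abs_add_le _ _
        _ = |μ j - lam j| + |μ i - lam i| := by rw [abs_neg]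
        _ = |μ i - lam i| + |μ j - lam j| := by ring
    linarith [hμlam i, hμlam j]
  have hvne : ∀ i, v i ≠ 0 := by
    intro i h0
    have h1 := (hμv i).2.1
    rw [h0] at h1
    simp at h1
  have hyne : ∀ i, R.mulVec (v i) ≠ 0 := by
    intro i h0
    exact hRdet ((Matrix.exists_mulVec_eq_zero_iff).mp ⟨v i, hvne i, h0⟩)
  set n : Fin k → ℝ := fun i => vecNorm (R.mulVec (v i)) with hndef
  have hn : ∀ i, 0 < n i := fun i => vecNorm_pos _ (hyne i)
  set sgn : Fin k → ℝ := fun i => if 0 ≤ v i i then 1 else -1 with hsgn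
  have habs_sgn : ∀ i, |sgn i| = 1 := by
    intro i
    rw [hsgn]
    by_cases h : 0 ≤ v i i <;> simp [h]
  set a : Fin k → Fin k → ℝ := fun i => (sgn i * (n i)⁻¹) • v i with hadef
  set xihat : Fin k → Fin k → ℝ := fun i => R.mulVec (a i) with hxihat
  -- eigen equation for a i
  have h_eig_a : ∀ i, (D + E).mulVec (a i) = μ i • a i := by
    intro i
    rw [hadef]
    simp only []
    rw [Matrix.mulVec_smul, (hμv i).1, smul_comm]
  -- unit norm
  have h_unit : ∀ i, vecNorm (xihat i) = 1 := by
    intro i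
    rw [hxihat]
    simp only []
    rw [Matrix.mulVec_smul, vecNorm_smul, abs_mul, habs_sgn, one_mul,
      abs_of_nonneg (inv_nonneg.mpr (hn i).le)]
    have hni : vecNorm (R.mulVec (v i)) = n i := rfl
    rw [hni]
    exact inv_mul_cancel₀ (hn i).ne'
  -- eigen equation for Ahat
  have hAhatR : Ahat * R = R * (D + E) := by
    rw [hDE, ← mul_assoc, ← mul_assoc, hRRi, one_mul]
  have h_eig : ∀ i, Ahat.mulVec (xihat i) = μ i • xihat i := by
    intro i
    rw [hxihat]
    simp only []
    rw [Matrix.mulVec_mulVec, hAhatR, ← Matrix.mulVec_mulVec, h_eig_a, Matrix.mulVec_smul]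
  -- coefficient vector norm bound
  have h_anorm : ∀ i, vecNorm (a i) ≤ l2OpNorm R⁻¹ := by
    intro i
    have h1 : R⁻¹.mulVec (xihat i) = a i := by
      rw [hxihat]
      simp only []
      rw [Matrix.mulVec_mulVec, hRiR, Matrix.one_mulVec]
    calc vecNorm (a i) = vecNorm (R⁻¹.mulVec (xihat i)) := by rw [h1]
      _ ≤ l2OpNorm R⁻¹ * vecNorm (xihat i) := vecNorm_mulVec_le _ _
      _ = l2OpNorm R⁻¹ := by rw [h_unit i, mul_one]
  -- off-diagonal coefficient bound
  have h_comp : ∀ i j, j ≠ i → |a i j| ≤ 2 * ε₃ * l2OpNorm R⁻¹ := by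
    intro i j hji
    have hco : (μ i - lam j) * a i j = (E.mulVec (a i)) j := by
      have h1 := congrFun (h_eig_a i) j
      simp only [Matrix.add_mulVec, hD, Matrix.mulVec_diagonal, Pi.add_apply, Pi.smul_apply,
        smul_eq_mul] at h1
      linarith
    have hgapj : γA - δ ≤ |μ i - lam j| := by
      have h1 := hγ i j (Ne.symm hji)
      have h2 : |lam i - lam j| ≤ |μ i - lam i| + |μ i - lam j| := by
        calc |lam i - lam j| = |(-(μ i - lam i)) + (μ i - lam j)| := by ring_nf
          _ ≤ |(-(μ i - lam i))| + |μ i - lam j| := abs_add_le _ _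
          _ = |μ i - lam i| + |μ i - lam j| := by rw [abs_neg]
      linarith [hμlam i]
    have hEa : |(E.mulVec (a i)) j| ≤ δ * l2OpNorm R⁻¹ := by
      calc |(E.mulVec (a i)) j| ≤ vecNorm (E.mulVec (a i)) := abs_coord_le_vecNorm _ _
        _ ≤ l2OpNorm E * vecNorm (a i) := vecNorm_mulVec_le _ _
        _ ≤ δ * l2OpNorm R⁻¹ := by
            apply mul_le_mul hEnorm (h_anorm i) (vecNorm_nonneg _) hδ0
    have hkey : (γA - δ) * |a i j| ≤ δ * l2OpNorm R⁻¹ := by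
      calc (γA - δ) * |a i j| ≤ |μ i - lam j| * |a i j| :=
            mul_le_mul_of_nonneg_right hgapj (abs_nonneg _)
        _ = |(μ i - lam j) * a i j| := (abs_mul _ _).symm
        _ = |(E.mulVec (a i)) j| := by rw [hco]
        _ ≤ δ * l2OpNorm R⁻¹ := hEa
    have hNi : 0 ≤ l2OpNorm R⁻¹ := l2OpNorm_nonneg _
    nlinarith [abs_nonneg (a i j)]
  -- sum of off-diagonal coefficients
  set s : Fin k → ℝ := fun i => ∑ j ∈ univ.erase i, |a i j| with hsdef
  have hs_le : ∀ i, s i ≤ ((k:ℝ) - 1) * (2 * ε₃ * l2OpNorm R⁻¹) := by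
    intro i
    rw [hsdef]
    simp only []
    calc ∑ j ∈ univ.erase i, |a i j| ≤ (univ.erase i).card • (2 * ε₃ * l2OpNorm R⁻¹) :=
          Finset.sum_le_card_nsmul _ _ _ (fun j hj => h_comp i j (Finset.ne_of_mem_erase hj))
      _ = ((univ.erase i).card : ℝ) * (2 * ε₃ * l2OpNorm R⁻¹) := nsmul_eq_mul _ _
      _ = ((k:ℝ) - 1) * (2 * ε₃ * l2OpNorm R⁻¹) := by
          rw [Finset.card_erase_of_mem (mem_univ i), Finset.card_univ, Fintype.card_fin,
            Nat.cast_sub hk, Nat.cast_one]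
  have hs_nonneg : ∀ i, 0 ≤ s i := by
    intro i
    rw [hsdef]
    exact Finset.sum_nonneg fun j _ => abs_nonneg _
  -- expansion of xihat in xi-basis
  have h_expand : ∀ i l, xihat i l = ∑ j, a i j * xi j l := by
    intro i l
    rw [hxihat]
    simp only []
    exact hColR (a i) l
  have h_aii_nonneg : ∀ i, 0 ≤ a i i := by
    intro i
    rw [hadef, hsgn]
    simp only [Pi.smul_apply, smul_eq_mul]
    by_cases h : 0 ≤ v i i
    · simp only [h, if_true]
      have := (hn i).le
      positivity
    · simp only [h, if_false]
      push_neg at h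
      have h2 : 0 ≤ (n i)⁻¹ := inv_nonneg.mpr (hn i).le
      nlinarith
  -- |a i i - 1| ≤ s i
  have h_aii : ∀ i, |a i i - 1| ≤ s i := by
    intro i
    have hsplit : xihat i - a i i • xi i = ∑ j ∈ univ.erase i, a i j • xi j := by
      funext l
      have h1 := h_expand i l
      have h2 : a i i * xi i l + ∑ j ∈ univ.erase i, a i j * xi j l = ∑ j, a i j * xi j l :=
        Finset.add_sum_erase univ (fun j => a i j * xi j l) (mem_univ i)
      have h3 : (∑ j ∈ univ.erase i, a i j • xi j) l = ∑ j ∈ univ.erase i, a i j * xi j l := by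
        rw [Finset.sum_apply]
        rfl
      simp only [Pi.sub_apply, Pi.smul_apply, smul_eq_mul, h3]
      linarith
    have h4 : |vecNorm (xihat i) - vecNorm (a i i • xi i)| ≤ vecNorm (xihat i - a i i • xi i) :=
      abs_vecNorm_sub_vecNorm_le _ _
    rw [hsplit] at h4
    have h5 : vecNorm (∑ j ∈ univ.erase i, a i j • xi j) ≤ s i := by
      refine le_trans (vecNorm_finset_sum_le _ _ _) (le_of_eq ?_)
      rw [hsdef]
      simp only []
      exact Finset.sum_congr rfl fun j _ => by rw [hunit j, mul_one]
    rw [h_unit i, vecNorm_smul, hunit i, mul_one, abs_of_nonneg (h_aii_nonneg i)] at h4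
    have := le_trans h4 h5
    rw [abs_sub_comm]
    exact le_trans (le_of_eq rfl) this
  -- eigenvector difference bound
  have h_diff : ∀ i, vecNorm (fun l => xihat i l - xi i l)
      ≤ 4 * ((k:ℝ) - 1) * l2OpNorm R⁻¹ * ε₃ := by
    intro i
    have hsplit2 : (fun l => xihat i l - xi i l)
        = (a i i - 1) • xi i + ∑ j ∈ univ.erase i, a i j • xi j := by
      funext l
      have h1 := h_expand i l
      have h2 : a i i * xi i l + ∑ j ∈ univ.erase i, a i j * xi j l = ∑ j, a i j * xi j l :=
        Finset.add_sum_erase univ (fun j => a i j * xi j l) (mem_univ i)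
      have h3 : (∑ j ∈ univ.erase i, a i j • xi j) l = ∑ j ∈ univ.erase i, a i j * xi j l := by
        rw [Finset.sum_apply]
        rfl
      simp only [Pi.add_apply, Pi.smul_apply, smul_eq_mul, h3]
      linarith
    rw [hsplit2]
    have h5 : vecNorm (∑ j ∈ univ.erase i, a i j • xi j) ≤ s i := by
      refine le_trans (vecNorm_finset_sum_le _ _ _) (le_of_eq ?_)
      rw [hsdef]
      simp only []
      exact Finset.sum_congr rfl fun j _ => by rw [hunit j, mul_one]
    calc vecNorm ((a i i - 1) • xi i + ∑ j ∈ univ.erase i, a i j • xi j)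
        ≤ vecNorm ((a i i - 1) • xi i) + vecNorm (∑ j ∈ univ.erase i, a i j • xi j) :=
          vecNorm_add_le _ _
      _ ≤ |a i i - 1| * 1 + s i := by
          rw [vecNorm_smul, hunit i]
          exact add_le_add (le_of_eq rfl) h5
      _ ≤ s i + s i := by
          rw [mul_one]
          exact add_le_add (h_aii i) le_rfl
      _ ≤ 2 * (((k:ℝ) - 1) * (2 * ε₃ * l2OpNorm R⁻¹)) := by linarith [hs_le i]
      _ = 4 * ((k:ℝ) - 1) * l2OpNorm R⁻¹ * ε₃ := by ring
  -- final assembly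
  refine ⟨Equiv.refl (Fin k), μ, xihat, hμinj, h_eig, h_unit, ?_, ?_, ?_⟩
  · intro i
    simpa using hμlam i
  · intro i
    simpa using h_diff i
  · -- Frobenius bound
    have hb0 : 0 ≤ 4 * ((k:ℝ) - 1) * l2OpNorm R⁻¹ * ε₃ := by
      have h1 : (1:ℝ) ≤ (k:ℝ) := by exact_mod_cast hk
      have h2 : (0:ℝ) ≤ (k:ℝ) - 1 := by linarith
      exact mul_nonneg (mul_nonneg (mul_nonneg (by norm_num) h2) (l2OpNorm_nonneg R⁻¹)) hε30
    have hsum : ∑ i, ∑ j, (((Matrix.of fun i j => xihat ((Equiv.refl (Fin k)) j) i) - R) i j) ^ 2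
        ≤ (k:ℝ) * (4 * ((k:ℝ) - 1) * l2OpNorm R⁻¹ * ε₃) ^ 2 := by
      rw [Finset.sum_comm]
      calc ∑ j, ∑ i, (((Matrix.of fun i j => xihat ((Equiv.refl (Fin k)) j) i) - R) i j) ^ 2
          = ∑ j, (vecNorm (fun l => xihat j l - xi j l)) ^ 2 := by
            refine Finset.sum_congr rfl fun j _ => ?_
            rw [sq_vecNorm]
            refine Finset.sum_congr rfl fun i _ => ?_
            rw [hRdef]
            simp [Matrix.sub_apply]
        _ ≤ ∑ (_ : Fin k), (4 * ((k:ℝ) - 1) * l2OpNorm R⁻¹ * ε₃) ^ 2 := by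
            refine Finset.sum_le_sum fun j _ => ?_
            have := h_diff j
            nlinarith [vecNorm_nonneg (fun l => xihat j l - xi j l)]
        _ = (k:ℝ) * (4 * ((k:ℝ) - 1) * l2OpNorm R⁻¹ * ε₃) ^ 2 := by
            rw [Finset.sum_const, Finset.card_univ, Fintype.card_fin, nsmul_eq_mul]
    rw [frobNorm]
    calc Real.sqrt (∑ i, ∑ j, (((Matrix.of fun i j => xihat ((Equiv.refl (Fin k)) j) i) - R) i j) ^ 2)
        ≤ Real.sqrt ((k:ℝ) * (4 * ((k:ℝ) - 1) * l2OpNorm R⁻¹ * ε₃) ^ 2) :=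
          Real.sqrt_le_sqrt hsum
      _ = Real.sqrt k * (4 * ((k:ℝ) - 1) * l2OpNorm R⁻¹ * ε₃) := by
          rw [Real.sqrt_mul (Nat.cast_nonneg k), Real.sqrt_sq hb0]
      _ = 4 * Real.sqrt k * ((k:ℝ) - 1) * l2OpNorm R⁻¹ * ε₃ := by ring
end
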